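/- For arbitrary real m×m matrices B and C and every integer k ≥ 0, σ_{(k,1)}(B, C) = Σ_{i=0}^{k} (−1)^i·σ_{k−i}(B)·tr(Bⁱ·C) = tr(T_k(B)·C). -/

import Mathlib

/-- `sigmaP A j` is the coefficient `σ_j(A)` of `t^j` in `det(I + t·A)`. -/
noncomputable def sigmaP {m : ℕ} (A : Matrix (Fin m) (Fin m) ℝ) (j : ℕ) : ℝ :=
  Polynomial.coeff (Matrix.det ((1 : Matrix (Fin m) (Fin m) (Polynomial ℝ)) +
    (Polynomial.X : Polynomial ℝ) • A.map Polynomial.C)) j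

/-- The Newton transformation
`T_k(A) = σ_k(A)·I − σ_{k−1}(A)·A + σ_{k−2}(A)·A² − ··· + (−1)^k·A^k`. -/
noncomputable def newtonT {m : ℕ} (A : Matrix (Fin m) (Fin m) ℝ) (k : ℕ) :
    Matrix (Fin m) (Fin m) ℝ :=
  ∑ i ∈ Finset.range (k + 1), ((-1 : ℝ) ^ i * sigmaP A (k - i)) • A ^ i

/-- `sigmaMulti A lam` is the coefficient `σ_λ(A₁, …, A_k)` of `t₁^{λ₁}···t_k^{λ_k}` in
`det(I_m + t₁A₁ + ··· + t_kA_k)`. -/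
noncomputable def sigmaMulti {m k : ℕ} (A : Fin k → Matrix (Fin m) (Fin m) ℝ)
    (lam : Fin k → ℕ) : ℝ :=
  MvPolynomial.coeff (Finsupp.equivFunOnFinite.symm lam)
    (Matrix.det ((1 : Matrix (Fin m) (Fin m) (MvPolynomial (Fin k) ℝ)) +
      ∑ i, (MvPolynomial.X i : MvPolynomial (Fin k) ℝ) • (A i).map MvPolynomial.C))

section Aux

open Polynomial Matrix

/-- The degree-one coefficient of `det (M + X • N)` is `tr (adj(M) ⬝ N)`. -/
lemma lemA {n : Type*} [Fintype n] [DecidableEq n] {S : Type*} [CommRing S]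
    (M N : Matrix n n S) :
    (Matrix.det (M.map C + (X : S[X]) • N.map C)).coeff 1 =
      Matrix.trace (M.adjugate * N) := by
  have h1 : Matrix.det (M.map C + (X : S[X]) • N.map C) =
      ∑ s : Finset n,
        (X : S[X]) ^ s.card * C (Matrix.det (Matrix.of (s.piecewise N M))) := by
    have h00 := (Matrix.detRowAlternating (R := S[X]) (n := n)).toMultilinearMap.map_add_univ
      ((X : S[X]) • N.map C) (M.map C)
    have h0 : Matrix.det (M.map C + (X : S[X]) • N.map C) =
        ∑ s : Finset n, (Matrix.detRowAlternating (R := S[X]) (n := n)).toMultilinearMap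
          (s.piecewise ((X : S[X]) • N.map C) (M.map C)) := by
      rw [← h00]; exact congrArg Matrix.det (add_comm (M.map C : Matrix n n S[X]) _)
    rw [h0]
    refine Finset.sum_congr rfl fun s _ => ?_
    have hpw : s.piecewise ((X : S[X]) • N.map C) (M.map C) =
        s.piecewise (fun i => (X : S[X]) • (s.piecewise (N.map C) (M.map C)) i)
          (s.piecewise (N.map C) (M.map C)) := by
      funext i j
      by_cases h : i ∈ s <;> simp [Finset.piecewise, h, Matrix.smul_apply]
    rw [hpw, (Matrix.detRowAlternating (R := S[X]) (n := n)).toMultilinearMap.map_piecewise_smul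
      (fun _ => (X : S[X])) _ s]
    rw [Finset.prod_const]
    have hmap : s.piecewise (N.map C) (M.map C) = (Matrix.of (s.piecewise N M)).map C := by
      funext i j
      by_cases h : i ∈ s <;> simp [Finset.piecewise, h, Matrix.map_apply]
    rw [hmap, smul_eq_mul]
    congr 1
    exact (RingHom.map_det (C : S →+* S[X]) (Matrix.of (s.piecewise N M))).symm
  rw [h1, Polynomial.finset_sum_coeff]
  have h2 : ∀ s : Finset n,
      ((X : S[X]) ^ s.card * C (Matrix.det (Matrix.of (s.piecewise N M)))).coeff 1
      = if s.card = 1 then Matrix.det (Matrix.of (s.piecewise N M)) else 0 := by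
    intro s
    rw [mul_comm, Polynomial.coeff_C_mul, Polynomial.coeff_X_pow]
    by_cases h : s.card = 1 <;> simp [h, eq_comm]
  simp_rw [h2]
  rw [← Finset.sum_filter]
  have hf : (Finset.univ : Finset (Finset n)).filter (fun s => s.card = 1)
      = (Finset.univ : Finset n).map ⟨_, Finset.singleton_injective⟩ := by
    rw [← Finset.powersetCard_one, Finset.powersetCard_eq_filter, Finset.powerset_univ]
  rw [hf, Finset.sum_map]
  have h3 : ∀ j : n, Matrix.det (Matrix.of (({j} : Finset n).piecewise N M))
      = ∑ i, M.adjugate i j * N j i := by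
    intro j
    have : Matrix.of (({j} : Finset n).piecewise N M) = M.updateRow j (N j) := by
      funext i l
      by_cases h : i = j <;> simp [Finset.piecewise, h, Matrix.updateRow_apply]
    rw [this, ← Matrix.cramer_transpose_apply, Matrix.cramer_eq_adjugate_mulVec,
      Matrix.mulVec, dotProduct]
    rw [← Matrix.adjugate_transpose]
    simp [Matrix.transpose_apply]
  simp only [Function.Embedding.coeFn_mk, h3]
  rw [Matrix.trace]
  simp only [Matrix.diag_apply, Matrix.mul_apply]
  rw [Finset.sum_comm]

lemma sigmaP_zero {m : ℕ} (B : Matrix (Fin m) (Fin m) ℝ) : sigmaP B 0 = 1 := by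
  unfold sigmaP
  rw [Polynomial.coeff_zero_eq_eval_zero]
  have := eval_det_add_X_smul (1 : Matrix (Fin m) (Fin m) ℝ[X]) B
  simpa using this

lemma newtonT_succ {m : ℕ} (B : Matrix (Fin m) (Fin m) ℝ) (j : ℕ) :
    newtonT B (j + 1) = sigmaP B (j + 1) • (1 : Matrix (Fin m) (Fin m) ℝ) - B * newtonT B j := by
  unfold newtonT
  rw [Finset.sum_range_succ', Finset.mul_sum]
  have h : ∀ i ∈ Finset.range (j + 1),
      ((-1 : ℝ) ^ (i + 1) * sigmaP B (j + 1 - (i + 1))) • B ^ (i + 1)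
        = -(B * (((-1 : ℝ) ^ i * sigmaP B (j - i)) • B ^ i)) := by
    intro i _
    rw [Matrix.mul_smul, ← neg_smul, Nat.succ_sub_succ]
    congr 1
    · ring
    · exact pow_succ' B i
  rw [Finset.sum_congr rfl h, Finset.sum_neg_distrib]
  simp only [pow_zero, Nat.sub_zero, one_mul]
  abel

/-- The coefficients of the adjugate of `1 + X • B` are the Newton transformations. -/
lemma lemB {m : ℕ} (B : Matrix (Fin m) (Fin m) ℝ) (k : ℕ) :
    (Matrix.adjugate (1 + (X : ℝ[X]) • B.map C)).map (fun p => p.coeff k) = newtonT B k := by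
  set M : Matrix (Fin m) (Fin m) ℝ[X] := 1 + (X : ℝ[X]) • B.map C with hM
  have hrec : ∀ j : ℕ,
      (Matrix.adjugate M).map (fun p => p.coeff (j + 1)) +
        B * (Matrix.adjugate M).map (fun p => p.coeff j) = sigmaP B (j + 1) • 1 := by
    intro j
    have hmul := Matrix.mul_adjugate M
    funext i l
    have h0 : (M * Matrix.adjugate M) i l = (M.det • (1 : Matrix (Fin m) (Fin m) ℝ[X])) i l := by
      rw [hmul]
    have hl : (M * Matrix.adjugate M) i l =
        Matrix.adjugate M i l + X * ((B.map C * Matrix.adjugate M) i l) := by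
      rw [hM]
      rw [Matrix.add_mul, Matrix.one_mul, Matrix.smul_mul]
      simp [Matrix.add_apply, Matrix.smul_apply, smul_eq_mul]
    rw [hl] at h0
    have h1 := congrArg (fun p => p.coeff (j + 1)) h0
    simp only [Polynomial.coeff_add, Polynomial.coeff_X_mul] at h1
    have h2 : ((B.map C * Matrix.adjugate M) i l).coeff j =
        (B * (Matrix.adjugate M).map (fun p => p.coeff j)) i l := by
      simp only [Matrix.mul_apply, Matrix.map_apply, Polynomial.finset_sum_coeff,
        Polynomial.coeff_C_mul]
    rw [h2] at h1
    have h3 : ((M.det • (1 : Matrix (Fin m) (Fin m) ℝ[X])) i l).coeff (j + 1) =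
        (sigmaP B (j + 1) • (1 : Matrix (Fin m) (Fin m) ℝ)) i l := by
      by_cases h : i = l <;>
        simp [Matrix.smul_apply, Matrix.one_apply, h, sigmaP, hM, smul_eq_mul]
    rw [h3] at h1
    simpa [Matrix.add_apply, Matrix.map_apply] using h1
  induction k with
  | zero =>
    have hadj : (Matrix.adjugate M).map (fun p => p.coeff 0) =
        Matrix.adjugate (M.map (Polynomial.constantCoeff)) := by
      have h := (Polynomial.constantCoeff (R := ℝ)).map_adjugate M
      rw [RingHom.mapMatrix_apply, RingHom.mapMatrix_apply] at h
      exact h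
    rw [hadj]
    have hM0 : M.map (Polynomial.constantCoeff) = 1 := by
      funext i j
      by_cases h : i = j <;>
        simp [hM, Matrix.add_apply, Matrix.smul_apply, Matrix.one_apply, h, Matrix.map_apply,
          smul_eq_mul]
    rw [hM0, Matrix.adjugate_one]
    unfold newtonT
    simp [sigmaP_zero]
  | succ j ih =>
    have := hrec j
    rw [ih] at this
    have hGj : (Matrix.adjugate M).map (fun p => p.coeff (j + 1)) =
        sigmaP B (j + 1) • 1 - B * newtonT B j := by
      rw [← this]; ring_nf; abel
    rw [hGj, newtonT_succ]

noncomputable abbrev psi : MvPolynomial (Fin 2) ℝ →+* Polynomial (Polynomial ℝ) :=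
  MvPolynomial.eval₂Hom ((Polynomial.C : ℝ[X] →+* ℝ[X][X]).comp (Polynomial.C : ℝ →+* ℝ[X]))
    ![Polynomial.C Polynomial.X, Polynomial.X]

lemma coeff_psi (f : MvPolynomial (Fin 2) ℝ) (k : ℕ) :
    MvPolynomial.coeff (Finsupp.equivFunOnFinite.symm ![k, 1]) f =
      ((psi f).coeff 1).coeff k := by
  have key : ∀ (d : Fin 2 →₀ ℕ) (c : ℝ),
      ((psi (MvPolynomial.monomial d c)).coeff 1).coeff k =
        if Finsupp.equivFunOnFinite.symm ![k, 1] = d then c else 0 := by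
    intro d c
    have h1 : psi (MvPolynomial.monomial d c) =
        Polynomial.C (Polynomial.C c * Polynomial.X ^ d 0) * Polynomial.X ^ d 1 := by
      rw [psi, MvPolynomial.eval₂Hom_monomial]
      rw [Finsupp.prod_fintype _ _ (fun i => pow_zero _)]
      rw [Fin.prod_univ_two]
      simp only [Matrix.cons_val_zero, Matrix.cons_val_one, Matrix.head_cons,
        RingHom.coe_comp, Function.comp_apply]
      rw [← Polynomial.C_pow, ← mul_assoc, ← Polynomial.C_mul]
    rw [h1]
    have hd : (Finsupp.equivFunOnFinite.symm ![k, 1] = d) ↔ (d 0 = k ∧ d 1 = 1) := by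
      rw [Equiv.symm_apply_eq]
      constructor
      · intro h
        constructor
        · exact (congrFun (congrArg (fun g => (g : Fin 2 → ℕ)) h.symm) 0)
        · exact (congrFun (congrArg (fun g => (g : Fin 2 → ℕ)) h.symm) 1)
      · intro ⟨h0, h1⟩
        ext i
        fin_cases i <;> simp [h0, h1]
    rw [Polynomial.coeff_C_mul, Polynomial.coeff_X_pow]
    by_cases e1 : d 1 = 1
    · rw [if_pos e1.symm, mul_one, Polynomial.coeff_C_mul, Polynomial.coeff_X_pow]
      by_cases e0 : d 0 = k
      · simp [hd, e0, e1]
      · rw [if_neg (fun h : k = d 0 => e0 h.symm), mul_zero,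
          if_neg (fun h => e0 (hd.mp h).1)]
    · rw [if_neg (fun h => e1 h.symm), mul_zero, Polynomial.coeff_zero]
      simp [hd, e1]
  conv_lhs => rw [MvPolynomial.as_sum f]
  conv_rhs => rw [MvPolynomial.as_sum f]
  rw [MvPolynomial.coeff_sum]
  rw [map_sum, Polynomial.finset_sum_coeff, Polynomial.finset_sum_coeff]
  refine Finset.sum_congr rfl fun d _ => ?_
  rw [key, MvPolynomial.coeff_monomial]
  exact if_congr eq_comm rfl rfl

end Aux

theorem stmt8 {m : ℕ} (B C : Matrix (Fin m) (Fin m) ℝ) (k : ℕ) :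
    sigmaMulti ![B, C] ![k, 1] =
      ∑ i ∈ Finset.range (k + 1), (-1 : ℝ) ^ i * sigmaP B (k - i) * Matrix.trace (B ^ i * C) ∧
    sigmaMulti ![B, C] ![k, 1] = Matrix.trace (newtonT B k * C) := by
  set Mk : Matrix (Fin m) (Fin m) (Polynomial ℝ) :=
    1 + (Polynomial.X : Polynomial ℝ) • B.map Polynomial.C with hMk
  set N : Matrix (Fin m) (Fin m) (Polynomial ℝ) := C.map Polynomial.C with hN
  set D : Matrix (Fin m) (Fin m) (MvPolynomial (Fin 2) ℝ) :=
    1 + ∑ i, (MvPolynomial.X i : MvPolynomial (Fin 2) ℝ) • ((![B, C]) i).map MvPolynomial.C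
    with hD
  have hmain : sigmaMulti ![B, C] ![k, 1] = Matrix.trace (newtonT B k * C) := by
    have h0 : sigmaMulti ![B, C] ![k, 1] = ((psi (Matrix.det D)).coeff 1).coeff k :=
      coeff_psi _ k
    have h1 : psi (Matrix.det D) = Matrix.det (D.map psi) := RingHom.map_det psi D
    have pX0 : psi (MvPolynomial.X 0) = Polynomial.C Polynomial.X := by simp [psi]
    have pX1 : psi (MvPolynomial.X 1) = Polynomial.X := by simp [psi]
    have pC : ∀ r : ℝ, psi (MvPolynomial.C r) = Polynomial.C (Polynomial.C r) := by
      intro r; simp [psi]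
    have h2 : D.map psi =
        Mk.map Polynomial.C + (Polynomial.X : Polynomial (Polynomial ℝ)) • N.map Polynomial.C := by
      have hsum : (∑ i' : Fin 2, (MvPolynomial.X i' : MvPolynomial (Fin 2) ℝ) •
          ((![B, C]) i').map MvPolynomial.C) =
          ((MvPolynomial.X (0 : Fin 2) : MvPolynomial (Fin 2) ℝ) • B.map MvPolynomial.C +
            (MvPolynomial.X (1 : Fin 2) : MvPolynomial (Fin 2) ℝ) • C.map MvPolynomial.C :
            Matrix (Fin m) (Fin m) (MvPolynomial (Fin 2) ℝ)) := by
        rw [Fin.sum_univ_two]; rfl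
      funext i j
      rw [hD, hsum]
      simp only [Matrix.map_apply, Matrix.add_apply, Matrix.smul_apply, smul_eq_mul,
        map_add, map_mul, pX0, pX1, pC, hMk, hN]
      by_cases h : i = j
      · subst h
        simp only [Matrix.one_apply_eq, map_one]
        ring
      · simp only [Matrix.one_apply_ne h, map_zero]
        ring
    have h3 : ((Matrix.det (D.map psi)).coeff 1).coeff k =
        (Matrix.trace (Mk.adjugate * N)).coeff k := by
      rw [h2, lemA]
    have h4 : (Matrix.trace (Mk.adjugate * N)).coeff k =
        Matrix.trace ((Mk.adjugate.map (fun p => p.coeff k)) * C) := by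
      simp only [Matrix.trace, Matrix.diag_apply, Matrix.mul_apply, Matrix.map_apply, hN,
        Polynomial.finset_sum_coeff, Polynomial.coeff_mul_C]
    rw [h0, h1, h3, h4, lemB]
  refine ⟨?_, hmain⟩
  rw [hmain]
  unfold newtonT
  rw [Matrix.sum_mul, Matrix.trace_sum]
  exact Finset.sum_congr rfl fun i _ => by
    rw [Matrix.smul_mul, Matrix.trace_smul, smul_eq_mul]
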